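/- arXiv:math/0605108 — 2 statements merged into one kernel-verified Lean document; each statement's English description precedes it below -/
import Mathlib

section
/- Fix r ≥ 3 and integers δ, μ_1 ≥ μ_2 ≥ ... ≥ μ_r ≥ 0 with δ ≥ μ_1 + μ_2 + μ_3. Define C² = δ² - Σ μ_i² and C·K = -3δ + Σ μ_i. Then C² + μ_3·(C·K) ≥ 0. -/
set_option maxHeartbeats 1000000


theorem stmt3 (r : ℕ) (hr : 3 ≤ r) (δ : ℤ) (μ : Fin r → ℤ)
    (hmono : Antitone μ) (hpos : ∀ i, 0 ≤ μ i)
    (hδ : μ ⟨0, by omega⟩ + μ ⟨1, by omega⟩ + μ ⟨2, by omega⟩ ≤ δ) :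
    (δ ^ 2 - ∑ i, (μ i) ^ 2) + μ ⟨2, by omega⟩ * (-3 * δ + ∑ i, μ i) ≥ 0 := by
  set i0 : Fin r := ⟨0, by omega⟩ with hi0
  set i1 : Fin r := ⟨1, by omega⟩ with hi1
  set i2 : Fin r := ⟨2, by omega⟩ with hi2
  have h01 : i0 ≠ i1 := by simp [hi0, hi1, Fin.ext_iff]
  have h02 : i0 ≠ i2 := by simp [hi0, hi2, Fin.ext_iff]
  have h12 : i1 ≠ i2 := by simp [hi1, hi2, Fin.ext_iff]
  set s : Finset (Fin r) := {i0, i1, i2} with hs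
  have hsub : s ⊆ Finset.univ := Finset.subset_univ s
  have hsum : ∑ i, (μ i2 * μ i - μ i ^ 2)
      = (∑ i ∈ s, (μ i2 * μ i - μ i ^ 2))
        + ∑ i ∈ Finset.univ \ s, (μ i2 * μ i - μ i ^ 2) := by
    rw [add_comm, Finset.sum_sdiff hsub]
  have hssum : ∑ i ∈ s, (μ i2 * μ i - μ i ^ 2)
      = (μ i2 * μ i0 - μ i0 ^ 2) + (μ i2 * μ i1 - μ i1 ^ 2)
        + (μ i2 * μ i2 - μ i2 ^ 2) := by
    rw [hs, Finset.sum_insert (by simp [h01, h02]),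
      Finset.sum_insert (by simp [h12]), Finset.sum_singleton]
    ring
  have hrest : 0 ≤ ∑ i ∈ Finset.univ \ s, (μ i2 * μ i - μ i ^ 2) := by
    apply Finset.sum_nonneg
    intro i hi
    simp only [hs, Finset.mem_sdiff, Finset.mem_insert, Finset.mem_singleton] at hi
    push_neg at hi
    have hile : μ i ≤ μ i2 := by
      apply hmono
      have h0 : i.val ≠ 0 := fun h => hi.2.1 (Fin.ext h)
      have h1 : i.val ≠ 1 := fun h => hi.2.2.1 (Fin.ext h)
      have h2 : i.val ≠ 2 := fun h => hi.2.2.2 (Fin.ext h)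
      simp only [hi2, Fin.le_def]
      omega
    nlinarith [hpos i]
  have key : 0 ≤ ∑ i, (μ i2 * μ i - μ i ^ 2) + (δ ^ 2 - 3 * δ * μ i2) := by
    rw [hsum, hssum]
    have ha := hpos i0
    have hb := hpos i1
    have hc := hpos i2
    have hab : μ i1 ≤ μ i0 := hmono (by simp [hi0, hi1, Fin.le_def])
    have hbc : μ i2 ≤ μ i1 := hmono (by simp [hi1, hi2, Fin.le_def])
    nlinarith [mul_nonneg (by linarith : (0:ℤ) ≤ δ - μ i0) (by linarith : (0:ℤ) ≤ μ i0 - μ i2),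
      mul_nonneg (by linarith : (0:ℤ) ≤ δ - μ i1) (by linarith : (0:ℤ) ≤ μ i1 - μ i2),
      mul_nonneg (by linarith : (0:ℤ) ≤ δ) (by linarith : (0:ℤ) ≤ δ - (μ i0 + μ i1 + μ i2))]
  have expand : (δ ^ 2 - ∑ i, (μ i) ^ 2) + μ i2 * (-3 * δ + ∑ i, μ i)
      = ∑ i, (μ i2 * μ i - μ i ^ 2) + (δ ^ 2 - 3 * δ * μ i2) := by
    rw [Finset.sum_sub_distrib, ← Finset.mul_sum]
    ring
  rw [ge_iff_le, expand]
  exact key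
end

section
/- Let d and m_1, ..., m_9 be integers defining a very ample class H = dh - Σ m_i e_i on the blow-up of P² at 9 general points, i.e., m_1 ≥ ... ≥ m_9 ≥ 0, d ≥ m_1 + m_2 + m_3, d ≥ m_1 + m_2 + 1, and 3d - Σ m_i ≥ 3. If moreover m_3 ≥ 2, then every numerical (-1)-class R = δh - Σ μ_i e_i - Σ ν_j E_j (with the E_j additional general points with multiplicities ν_j ≤ 2, δ ≥ 0, μ_i, ν_j ≥ 0) satisfies (L - 2E_k)·R ≥ -1, where L - 2E_k = dh - Σ m_ie_i - Σ 2E_j. Consequently, by Lemma 4.4 applied after one quadratic transformation, the class is in standard form and cannot meet a (-1)-curve in intersection ≤ -2. -/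
private lemma sum_univ_nine' (f : Fin 9 → ℤ) :
    ∑ i, f i = f 0 + f 1 + f 2 + f 3 + f 4 + f 5 + f 6 + f 7 + f 8 := by
  rw [Fin.sum_univ_castSucc, Fin.sum_univ_eight]
  rfl

theorem stmt16 (d : ℤ) (m : Fin 9 → ℤ)
    (hmono : Antitone m) (hm9 : 0 ≤ m 8)
    (hstd : m 0 + m 1 + m 2 ≤ d)
    (hva1 : m 0 + m 1 + 1 ≤ d)
    (hva2 : 3 ≤ 3 * d - ∑ i, m i)
    (hm3 : 2 ≤ m 2)
    (s : ℕ) (δ : ℤ) (μ : Fin 9 → ℤ) (ν : Fin s → ℤ)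
    (hδ : 0 ≤ δ) (hμ : ∀ i, 0 ≤ μ i)
    (hν : ∀ j, 0 ≤ ν j ∧ ν j ≤ 2)
    (hR2 : δ ^ 2 - ∑ i, (μ i) ^ 2 - ∑ j, (ν j) ^ 2 = -1)
    (hRK : 3 * δ - ∑ i, μ i - ∑ j, ν j = 1) :
    -1 ≤ d * δ - ∑ i, m i * μ i - ∑ j, 2 * ν j := by
  have hν1 : (0:ℤ) ≤ ∑ j, ν j := Finset.sum_nonneg fun j _ => (hν j).1
  have hν2 : (0:ℤ) ≤ ∑ j, (ν j) ^ 2 := Finset.sum_nonneg fun j _ => sq_nonneg _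
  have hμs : (0:ℤ) ≤ ∑ i, μ i := Finset.sum_nonneg fun i _ => hμ i
  -- δ ≥ 1
  have hδ1 : 1 ≤ δ := by
    have h3 : 1 ≤ 3 * δ := by linarith
    omega
  -- each μ i ≤ δ
  have hle : ∀ i : Fin 9, μ i ≤ δ := by
    intro i
    have h1 : (μ i) ^ 2 ≤ ∑ k, (μ k) ^ 2 :=
      Finset.single_le_sum (fun k _ => sq_nonneg (μ k)) (Finset.mem_univ i)
    have h2 : (μ i) ^ 2 ≤ δ ^ 2 + 1 := by linarith
    by_contra h
    push_neg at h
    have h3 : δ + 1 ≤ μ i := h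
    nlinarith [mul_self_le_mul_self (by linarith : (0:ℤ) ≤ δ + 1) h3]
  -- monotonicity facts
  have hm02 : m 2 ≤ m 0 := hmono (by decide : (0:Fin 9) ≤ 2)
  have hm12 : m 2 ≤ m 1 := hmono (by decide : (1:Fin 9) ≤ 2)
  have h3' : m 3 ≤ m 2 := hmono (by decide : (2:Fin 9) ≤ 3)
  have h4' : m 4 ≤ m 2 := hmono (by decide : (2:Fin 9) ≤ 4)
  have h5' : m 5 ≤ m 2 := hmono (by decide : (2:Fin 9) ≤ 5)
  have h6' : m 6 ≤ m 2 := hmono (by decide : (2:Fin 9) ≤ 6)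
  have h7' : m 7 ≤ m 2 := hmono (by decide : (2:Fin 9) ≤ 7)
  have h8' : m 8 ≤ m 2 := hmono (by decide : (2:Fin 9) ≤ 8)
  -- key bound on ∑ m i * μ i
  have key : ∑ i, m i * μ i ≤
      m 2 * (∑ i, μ i) + (m 0 - m 2) * μ 0 + (m 1 - m 2) * μ 1 := by
    have p3 : (m 3 - m 2) * μ 3 ≤ 0 :=
      mul_nonpos_of_nonpos_of_nonneg (by linarith) (hμ 3)
    have p4 : (m 4 - m 2) * μ 4 ≤ 0 :=
      mul_nonpos_of_nonpos_of_nonneg (by linarith) (hμ 4)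
    have p5 : (m 5 - m 2) * μ 5 ≤ 0 :=
      mul_nonpos_of_nonpos_of_nonneg (by linarith) (hμ 5)
    have p6 : (m 6 - m 2) * μ 6 ≤ 0 :=
      mul_nonpos_of_nonpos_of_nonneg (by linarith) (hμ 6)
    have p7 : (m 7 - m 2) * μ 7 ≤ 0 :=
      mul_nonpos_of_nonpos_of_nonneg (by linarith) (hμ 7)
    have p8 : (m 8 - m 2) * μ 8 ≤ 0 :=
      mul_nonpos_of_nonpos_of_nonneg (by linarith) (hμ 8)
    rw [sum_univ_nine' (fun i => m i * μ i), sum_univ_nine' μ]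
    nlinarith [p3, p4, p5, p6, p7, p8]
  -- bound on the ν part
  have hνb : ∑ j, 2 * ν j ≤ m 2 * ∑ j, ν j := by
    rw [Finset.mul_sum]
    exact Finset.sum_le_sum fun j _ =>
      mul_le_mul_of_nonneg_right hm3 (hν j).1
  -- assemble
  have e0 : (m 0 - m 2) * μ 0 ≤ (m 0 - m 2) * δ :=
    mul_le_mul_of_nonneg_left (hle 0) (by linarith)
  have e1 : (m 1 - m 2) * μ 1 ≤ (m 1 - m 2) * δ :=
    mul_le_mul_of_nonneg_left (hle 1) (by linarith)
  have e2 : (m 0 + m 1 + m 2) * δ ≤ d * δ :=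
    mul_le_mul_of_nonneg_right hstd hδ
  nlinarith [key, hνb, e0, e1, e2, hRK, hm3]
end
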